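/- arXiv:2101.06093 — 2 statements merged into one kernel-verified Lean document; each statement's English description precedes it below -/
import Mathlib

section
/- Let f : [a,b] × [c,d] → ℝ be continuous and suppose there exist c₀ > 0 and 0 ≤ s ≤ 1 such that |f(t,u) - f(x,y)| ≤ c₀ ‖(t,u) - (x,y)‖₂^{s} for all (t,u), (x,y) ∈ [a,b] × [c,d]. Then dim_H(G(f)) ≤ \underline{dim}_B(G(f)) ≤ \overline{dim}_B(G(f)) ≤ 3 - s. The same conclusion holds if the Hölder condition is only assumed for pairs of points with ‖(t,u) - (x,y)‖₂ < δ for some δ > 0. -/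
open MeasureTheory Set Filter
open scoped Classical

/-- Mixed (left-hand sided) Katugampola fractional integral of a bivariate function. -/
noncomputable def mixedKI (a c p q α β : ℝ) (f : ℝ → ℝ → ℝ) (x y : ℝ) : ℝ :=
  ((p + 1) ^ (1 - α) * (q + 1) ^ (1 - β) / (Real.Gamma α * Real.Gamma β)) *
    ∫ s in a..x, ∫ t in c..y,
      (x ^ (p + 1) - s ^ (p + 1)) ^ (α - 1) * (y ^ (q + 1) - t ^ (q + 1)) ^ (β - 1)
        * s ^ p * t ^ q * f s t

/-- Univariate Katugampola fractional integral. -/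
noncomputable def KI (a p α : ℝ) (g : ℝ → ℝ) (x : ℝ) : ℝ :=
  ((p + 1) ^ (1 - α) / Real.Gamma α) *
    ∫ t in a..x, (x ^ (p + 1) - t ^ (p + 1)) ^ (α - 1) * t ^ p * g t

/-- Bounded variation in the sense of Arzelà on `[a,b] × [c,d]`. -/
def ArzelaBV (a b c d : ℝ) (f : ℝ → ℝ → ℝ) : Prop :=
  ∃ M > 0, ∀ (m : ℕ) (x y : ℕ → ℝ),
    x 0 = a → x m = b → y 0 = c → y m = d →
    (∀ i < m, x i ≤ x (i + 1)) → (∀ i < m, y i ≤ y (i + 1)) →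
    ∑ i ∈ Finset.range m, |f (x (i + 1)) (y (i + 1)) - f (x i) (y i)| ≤ M

/-- A bounded bivariate function, monotone (nondecreasing) in each variable on the rectangle. -/
def MonotoneRect (a b c d : ℝ) (g : ℝ → ℝ → ℝ) : Prop :=
  (∃ M : ℝ, ∀ x ∈ Icc a b, ∀ y ∈ Icc c d, |g x y| ≤ M) ∧
  (∀ x ∈ Icc a b, ∀ x' ∈ Icc a b, x ≤ x' → ∀ y ∈ Icc c d, g x y ≤ g x' y) ∧
  (∀ y ∈ Icc c d, ∀ y' ∈ Icc c d, y ≤ y' → ∀ x ∈ Icc a b, g x y ≤ g x y')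

/-- Graph of a bivariate function over the rectangle `[a,b] × [c,d]`, as a subset of `ℝ³`. -/
def graphRect (a b c d : ℝ) (f : ℝ → ℝ → ℝ) : Set (ℝ × ℝ × ℝ) :=
  {p | p.1 ∈ Icc a b ∧ p.2.1 ∈ Icc c d ∧ p.2.2 = f p.1 p.2.1}

/-- A cube of the standard `δ`-mesh of `ℝ³`. -/
def meshCube (δ : ℝ) (i j k : ℤ) : Set (ℝ × ℝ × ℝ) :=
  Icc (i * δ) ((i + 1) * δ) ×ˢ Icc (j * δ) ((j + 1) * δ) ×ˢ Icc (k * δ) ((k + 1) * δ)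

/-- Number of `δ`-mesh cubes of `ℝ³` that intersect `S`. -/
noncomputable def meshCount (δ : ℝ) (S : Set (ℝ × ℝ × ℝ)) : ℕ :=
  Nat.card {p : ℤ × ℤ × ℤ | (meshCube δ p.1 p.2.1 p.2.2 ∩ S).Nonempty}

/-- Upper box (Minkowski) dimension of a subset of `ℝ³`. -/
noncomputable def upperBoxDim (S : Set (ℝ × ℝ × ℝ)) : ℝ :=
  limsup (fun δ : ℝ => Real.log (meshCount δ S) / (-Real.log δ)) (nhdsWithin 0 (Ioi 0))

/-- Lower box (Minkowski) dimension of a subset of `ℝ³`. -/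
noncomputable def lowerBoxDim (S : Set (ℝ × ℝ × ℝ)) : ℝ :=
  liminf (fun δ : ℝ => Real.log (meshCount δ S) / (-Real.log δ)) (nhdsWithin 0 (Ioi 0))

/-- Maximum range of `f` over a subset `A` of the plane. -/
noncomputable def Rf (f : ℝ → ℝ → ℝ) (A : Set (ℝ × ℝ)) : ℝ :=
  sSup {r | ∃ p ∈ A, ∃ q ∈ A, r = |f p.1 p.2 - f q.1 q.2|}

/-- The `(i,j)`-th sub-rectangle of the `m × n` uniform partition of `[a,b] × [c,d]`. -/
def subRect (a b c d : ℝ) (m n : ℕ) (i j : ℕ) : Set (ℝ × ℝ) :=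
  Icc (a + ((i : ℝ) - 1) * (b - a) / m) (a + (i : ℝ) * (b - a) / m) ×ˢ
    Icc (c + ((j : ℝ) - 1) * (d - c) / n) (c + (j : ℝ) * (d - c) / n)

/-- The sequence `a₀ = a`, `aₙ = a + (b-a)/2 + ⋯ + (b-a)/2ⁿ = b - (b-a)/2ⁿ`. -/
noncomputable def aseq (a b : ℝ) (n : ℕ) : ℝ := b - (b - a) / 2 ^ n

/-- The affine map `ψₙ : [aₙ₋₁, aₙ] → [a₀, a₁]`. -/
noncomputable def psiN (a b : ℝ) (n : ℕ) (x : ℝ) : ℝ :=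
  2 ^ n * ((aseq a b 1 - aseq a b 0) * x + aseq a b 0 * aseq a b n
    - aseq a b 1 * aseq a b (n - 1)) / (b - a)

/-- The function `Fₙ(x,y) = (1/n) φ(ψₙ(x), y) + ((n-1)/n) φ(a₀, y)` (for `n = 1` this is `φ`). -/
noncomputable def Fseq (a b : ℝ) (φ : ℝ → ℝ → ℝ) (n : ℕ) (x y : ℝ) : ℝ :=
  (1 / (n : ℝ)) * φ (psiN a b n x) y + (((n : ℝ) - 1) / (n : ℝ)) * φ (aseq a b 0) y

/-!
Above each square of the `δ`-mesh of the rectangle, two points of the graph are at horizontal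
distance at most `√2 δ`, so by the Hölder condition the graph oscillates by at most `c₀ (√2 δ)^s`
there and meets at most `2 c₀ (√2 δ)^s / δ + 2` cubes of that column. Summing over the `O(δ⁻²)`
columns gives `N_δ(G) = O(δ^(s - 3))`, hence the upper box dimension is at most `3 - s`.
For `dim_H`: at the scales `δ → 0` where `N_δ(G) < δ^(-t)`, the mesh cubes meeting `G` cover it
with `∑ diam^t ≤ N_δ(G) δ^t ≤ 1`, so `μH[t] G ≤ 1` and `dim_H G ≤ t` for every `t` above the
lower box dimension.
-/

open scoped Topology ENNReal

section Mesh

variable {δ : ℝ}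

/-- `meshCount δ S` is the `Nat.card` of this set, hence `0` (not `∞`) when it is infinite. -/
def meshCubesMeeting (δ : ℝ) (S : Set (ℝ × ℝ × ℝ)) : Set (ℤ × ℤ × ℤ) :=
  {p | (meshCube δ p.1 p.2.1 p.2.2 ∩ S).Nonempty}

lemma mem_Icc_floor_div_mul (hδ : 0 < δ) (x : ℝ) :
    x ∈ Icc ((⌊x / δ⌋ : ℝ) * δ) ((⌊x / δ⌋ + 1) * δ) :=
  ⟨(le_div_iff₀ hδ).1 (Int.floor_le _), (div_le_iff₀ hδ).1 (Int.lt_floor_add_one _).le⟩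

lemma subset_iUnion_meshCube (hδ : 0 < δ) (S : Set (ℝ × ℝ × ℝ)) :
    S ⊆ ⋃ p : meshCubesMeeting δ S, meshCube δ p.1.1 p.1.2.1 p.1.2.2 := by
  rintro ⟨x, y, z⟩ hS
  have hmem : (x, y, z) ∈ meshCube δ ⌊x / δ⌋ ⌊y / δ⌋ ⌊z / δ⌋ :=
    ⟨mem_Icc_floor_div_mul hδ x, mem_Icc_floor_div_mul hδ y, mem_Icc_floor_div_mul hδ z⟩
  exact mem_iUnion.2 ⟨⟨(⌊x / δ⌋, ⌊y / δ⌋, ⌊z / δ⌋), (x, y, z), hmem, hS⟩, hmem⟩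

lemma abs_sub_le_of_mem_meshInterval {m : ℤ} {u v : ℝ} (hu : u ∈ Icc ((m : ℝ) * δ) ((m + 1) * δ))
    (hv : v ∈ Icc ((m : ℝ) * δ) ((m + 1) * δ)) : |u - v| ≤ δ :=
  (Real.dist_le_of_mem_Icc hu hv).trans_eq (by ring)

lemma ediam_meshCube_le (i j k : ℤ) : Metric.ediam (meshCube δ i j k) ≤ ENNReal.ofReal δ := by
  refine Metric.ediam_le_of_forall_dist_le ?_
  rintro p ⟨hp₁, hp₂, hp₃⟩ q ⟨hq₁, hq₂, hq₃⟩
  simp only [Prod.dist_eq, Real.dist_eq, max_le_iff]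
  exact ⟨abs_sub_le_of_mem_meshInterval hp₁ hq₁, abs_sub_le_of_mem_meshInterval hp₂ hq₂,
    abs_sub_le_of_mem_meshInterval hp₃ hq₃⟩

/-- The indices `i` whose mesh interval `[i δ, (i + 1) δ]` can meet `[a, b]`. -/
noncomputable def meshIndices (δ a b : ℝ) : Finset ℤ :=
  Finset.Icc (⌈a / δ⌉ - 1) ⌊b / δ⌋

lemma mem_meshIndices {a b x : ℝ} {i : ℤ} (hδ : 0 < δ) (hx : x ∈ Icc a b)
    (hi : x ∈ Icc ((i : ℝ) * δ) ((i + 1) * δ)) : i ∈ meshIndices δ a b := by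
  have hceil : ⌈a / δ⌉ ≤ i + 1 := by
    rw [Int.ceil_le, div_le_iff₀ hδ]
    exact_mod_cast hx.1.trans hi.2
  have hfloor : i ≤ ⌊b / δ⌋ := by
    rw [Int.le_floor, le_div_iff₀ hδ]
    exact hi.1.trans hx.2
  exact Finset.mem_Icc.2 ⟨by omega, hfloor⟩

lemma card_meshIndices_le {a b : ℝ} (hδ : 0 < δ) (hab : a ≤ b) :
    ((meshIndices δ a b).card : ℝ) ≤ (b - a) / δ + 2 := by
  have hlen : ((⌊b / δ⌋ + 1 - (⌈a / δ⌉ - 1) : ℤ) : ℝ) ≤ (b - a) / δ + 2 := by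
    have := Int.floor_le (b / δ)
    have := Int.le_ceil (a / δ)
    push_cast
    linarith [sub_div b a δ]
  have hnonneg : 0 ≤ (b - a) / δ + 2 := by
    have := div_nonneg (sub_nonneg.2 hab) hδ.le
    linarith
  rw [meshIndices, Int.card_Icc, ← Int.cast_natCast, Int.toNat_eq_max, Int.cast_max]
  exact max_le hlen (by simpa using hnonneg)

end Mesh

lemma exists_column_center {S : Set (ℝ × ℝ × ℝ)} {ρ δ : ℝ}
    (hosc : ∀ p ∈ S, ∀ q ∈ S, |p.1 - q.1| ≤ δ → |p.2.1 - q.2.1| ≤ δ → |p.2.2 - q.2.2| ≤ ρ)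
    (i j : ℤ) : ∃ z : ℝ, ∀ p ∈ S, p.1 ∈ Icc ((i : ℝ) * δ) ((i + 1) * δ) →
      p.2.1 ∈ Icc ((j : ℝ) * δ) ((j + 1) * δ) → p.2.2 ∈ Icc (z - ρ) (z + ρ) := by
  by_cases h : ∃ q ∈ S, q.1 ∈ Icc ((i : ℝ) * δ) ((i + 1) * δ) ∧
      q.2.1 ∈ Icc ((j : ℝ) * δ) ((j + 1) * δ)
  · obtain ⟨q, hq, hqi, hqj⟩ := h
    refine ⟨q.2.2, fun p hp hpi hpj => ?_⟩
    have := abs_sub_le_iff.1 (hosc p hp q hq (abs_sub_le_of_mem_meshInterval hpi hqi)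
      (abs_sub_le_of_mem_meshInterval hpj hqj))
    constructor <;> linarith
  · simp only [not_exists, not_and] at h
    exact ⟨0, fun p hp hpi hpj => absurd hpj (h p hp hpi)⟩

theorem meshCount_le_of_oscillation {S : Set (ℝ × ℝ × ℝ)} {a b c d ρ δ : ℝ} (hδ : 0 < δ)
    (hab : a ≤ b) (hcd : c ≤ d) (hρ : 0 ≤ ρ) (hS : S ⊆ Icc a b ×ˢ Icc c d ×ˢ univ)
    (hosc : ∀ p ∈ S, ∀ q ∈ S, |p.1 - q.1| ≤ δ → |p.2.1 - q.2.1| ≤ δ → |p.2.2 - q.2.2| ≤ ρ) :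
    (meshCubesMeeting δ S).Finite ∧
      (meshCount δ S : ℝ) ≤ ((b - a) / δ + 2) * ((d - c) / δ + 2) * (2 * ρ / δ + 2) := by
  choose g hg using exists_column_center hosc
  set T : Finset (ℤ × ℤ × ℤ) := (meshIndices δ a b ×ˢ meshIndices δ c d).biUnion fun ij =>
    {ij.1} ×ˢ {ij.2} ×ˢ meshIndices δ (g ij.1 ij.2 - ρ) (g ij.1 ij.2 + ρ) with hT
  have hsub : meshCubesMeeting δ S ⊆ T := by
    rintro ⟨i, j, k⟩ ⟨p, ⟨hpi, hpj, hpk⟩, hp⟩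
    obtain ⟨hpa, hpc, -⟩ := hS hp
    simp only [hT, Finset.coe_biUnion, Finset.coe_product, Finset.coe_singleton, mem_iUnion,
      mem_prod, Finset.mem_coe, mem_singleton_iff, exists_prop, Prod.exists]
    exact ⟨i, j, ⟨mem_meshIndices hδ hpa hpi, mem_meshIndices hδ hpc hpj⟩, rfl, rfl,
      mem_meshIndices hδ (hg i j p hp hpi hpj) hpk⟩
  refine ⟨T.finite_toSet.subset hsub, ?_⟩
  have hcount : meshCount δ S ≤ T.card :=
    (Nat.card_mono T.finite_toSet hsub).trans_eq (by simp)
  have hcol : ∀ ij ∈ meshIndices δ a b ×ˢ meshIndices δ c d,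
      (({ij.1} ×ˢ {ij.2} ×ˢ meshIndices δ (g ij.1 ij.2 - ρ) (g ij.1 ij.2 + ρ) :
        Finset (ℤ × ℤ × ℤ)).card : ℝ) ≤ 2 * ρ / δ + 2 := by
    intro ij _
    simpa [Finset.card_product, two_mul] using
      card_meshIndices_le hδ (by linarith : g ij.1 ij.2 - ρ ≤ g ij.1 ij.2 + ρ)
  calc (meshCount δ S : ℝ) ≤ T.card := by exact_mod_cast hcount
    _ ≤ ∑ ij ∈ meshIndices δ a b ×ˢ meshIndices δ c d,
          (({ij.1} ×ˢ {ij.2} ×ˢ meshIndices δ (g ij.1 ij.2 - ρ) (g ij.1 ij.2 + ρ) :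
            Finset (ℤ × ℤ × ℤ)).card : ℝ) := by exact_mod_cast Finset.card_biUnion_le
    _ ≤ (meshIndices δ a b).card * (meshIndices δ c d).card * (2 * ρ / δ + 2) := by
        refine (Finset.sum_le_card_nsmul _ _ _ hcol).trans_eq ?_
        rw [nsmul_eq_mul, Finset.card_product, Nat.cast_mul]
    _ ≤ ((b - a) / δ + 2) * ((d - c) / δ + 2) * (2 * ρ / δ + 2) := by
        gcongr
        exacts [card_meshIndices_le hδ hab, card_meshIndices_le hδ hcd]

section BoxDim

variable {S : Set (ℝ × ℝ × ℝ)} {C t δ : ℝ}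

noncomputable def meshRatio (S : Set (ℝ × ℝ × ℝ)) (δ : ℝ) : ℝ :=
  Real.log (meshCount δ S) / (-Real.log δ)

lemma meshRatio_nonneg (hδ : 0 < δ) (hδ1 : δ < 1) : 0 ≤ meshRatio S δ :=
  div_nonneg (Real.log_natCast_nonneg _) (neg_nonneg.2 (Real.log_nonpos hδ.le hδ1.le))

lemma isBoundedUnder_ge_meshRatio (S : Set (ℝ × ℝ × ℝ)) :
    IsBoundedUnder (· ≥ ·) (𝓝[>] 0) (meshRatio S) := by
  refine isBoundedUnder_of_eventually_ge (a := 0) ?_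
  filter_upwards [Ioo_mem_nhdsGT one_pos] with δ ⟨hδ, hδ1⟩
  exact meshRatio_nonneg hδ hδ1

lemma meshRatio_le_of_meshCount_le (hC : 1 ≤ C) (ht : 0 ≤ t) (hδ : 0 < δ) (hδ1 : δ < 1)
    (hN : (meshCount δ S : ℝ) ≤ C * δ ^ (-t)) :
    meshRatio S δ ≤ t + Real.log C / (-Real.log δ) := by
  have hlogδ : 0 < -Real.log δ := neg_pos.2 (Real.log_neg hδ hδ1)
  have hlogN : Real.log (meshCount δ S) ≤ Real.log C + t * (-Real.log δ) := by
    rcases Nat.eq_zero_or_pos (meshCount δ S) with h0 | hpos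
    · rw [h0, Nat.cast_zero, Real.log_zero]
      have := Real.log_nonneg hC
      positivity
    · calc Real.log (meshCount δ S) ≤ Real.log (C * δ ^ (-t)) :=
            Real.log_le_log (by exact_mod_cast hpos) hN
        _ = Real.log C + t * (-Real.log δ) := by
            rw [Real.log_mul (by positivity) (by positivity), Real.log_rpow hδ]
            ring
  rw [meshRatio, div_le_iff₀ hlogδ, add_mul, div_mul_cancel₀ _ hlogδ.ne']
  linarith

lemma tendsto_add_log_div_neg_log (C t : ℝ) :
    Tendsto (fun δ => t + Real.log C / (-Real.log δ)) (𝓝[>] 0) (𝓝 t) := by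
  simpa using tendsto_const_nhds.add <| tendsto_const_nhds.div_atTop
    (tendsto_neg_atBot_atTop.comp Real.tendsto_log_nhdsGT_zero)

lemma eventually_meshRatio_le (hC : 1 ≤ C) (ht : 0 ≤ t)
    (hN : ∀ᶠ δ in 𝓝[>] 0, (meshCount δ S : ℝ) ≤ C * δ ^ (-t)) :
    ∀ᶠ δ in 𝓝[>] 0, meshRatio S δ ≤ t + Real.log C / (-Real.log δ) := by
  filter_upwards [hN, Ioo_mem_nhdsGT one_pos] with δ hNδ ⟨hδ, hδ1⟩
  exact meshRatio_le_of_meshCount_le hC ht hδ hδ1 hNδ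

lemma isBoundedUnder_le_meshRatio (hC : 1 ≤ C) (ht : 0 ≤ t)
    (hN : ∀ᶠ δ in 𝓝[>] 0, (meshCount δ S : ℝ) ≤ C * δ ^ (-t)) :
    IsBoundedUnder (· ≤ ·) (𝓝[>] 0) (meshRatio S) :=
  (tendsto_add_log_div_neg_log C t).isBoundedUnder_le.mono_le (eventually_meshRatio_le hC ht hN)

theorem upperBoxDim_le_of_meshCount_le (hC : 1 ≤ C) (ht : 0 ≤ t)
    (hN : ∀ᶠ δ in 𝓝[>] 0, (meshCount δ S : ℝ) ≤ C * δ ^ (-t)) :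
    upperBoxDim S ≤ t :=
  calc upperBoxDim S ≤ limsup (fun δ => t + Real.log C / (-Real.log δ)) (𝓝[>] 0) :=
        limsup_le_limsup (eventually_meshRatio_le hC ht hN)
          (isBoundedUnder_ge_meshRatio S).isCoboundedUnder_flip
          (tendsto_add_log_div_neg_log C t).isBoundedUnder_le
    _ = t := (tendsto_add_log_div_neg_log C t).limsup_eq

lemma lowerBoxDim_nonneg (hbdd : IsBoundedUnder (· ≤ ·) (𝓝[>] 0) (meshRatio S)) :
    0 ≤ lowerBoxDim S := by
  refine le_liminf_of_le hbdd.isCoboundedUnder_flip ?_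
  filter_upwards [Ioo_mem_nhdsGT one_pos] with δ ⟨hδ, hδ1⟩
  exact meshRatio_nonneg hδ hδ1

lemma lowerBoxDim_le_upperBoxDim (hbdd : IsBoundedUnder (· ≤ ·) (𝓝[>] 0) (meshRatio S)) :
    lowerBoxDim S ≤ upperBoxDim S :=
  liminf_le_limsup hbdd (isBoundedUnder_ge_meshRatio S)

lemma meshCount_lt_rpow_of_meshRatio_lt (hδ : 0 < δ) (hδ1 : δ < 1) (h : meshRatio S δ < t) :
    (meshCount δ S : ℝ) < δ ^ (-t) := by
  rcases Nat.eq_zero_or_pos (meshCount δ S) with h0 | hpos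
  · rw [h0, Nat.cast_zero]
    positivity
  have hlogδ : 0 < -Real.log δ := neg_pos.2 (Real.log_neg hδ hδ1)
  rw [← Real.log_lt_log_iff (by exact_mod_cast hpos) (by positivity), Real.log_rpow hδ]
  have := (div_lt_iff₀ hlogδ).1 h
  linarith

lemma tsum_ediam_meshCube_rpow_le_one (ht : 0 ≤ t) (hδ : 0 < δ)
    (hfin : (meshCubesMeeting δ S).Finite) (hN : (meshCount δ S : ℝ) < δ ^ (-t)) :
    ∑' p : meshCubesMeeting δ S, Metric.ediam (meshCube δ p.1.1 p.1.2.1 p.1.2.2) ^ t ≤ 1 := by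
  have : Finite (meshCubesMeeting δ S) := hfin.to_subtype
  calc ∑' p : meshCubesMeeting δ S, Metric.ediam (meshCube δ p.1.1 p.1.2.1 p.1.2.2) ^ t
      ≤ ∑' _ : meshCubesMeeting δ S, ENNReal.ofReal δ ^ t :=
        ENNReal.tsum_le_tsum fun _ => ENNReal.rpow_le_rpow (ediam_meshCube_le _ _ _) ht
    _ = ENNReal.ofReal (meshCount δ S * δ ^ t) := by
        rw [ENNReal.tsum_const, ENat.card_eq_coe_natCard, ENNReal.ofReal_mul (by positivity),
          ENNReal.ofReal_rpow_of_pos hδ, ENNReal.ofReal_natCast]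
        rfl
    _ ≤ ENNReal.ofReal (δ ^ (-t) * δ ^ t) := by gcongr
    _ = 1 := by rw [← Real.rpow_add hδ, neg_add_cancel, Real.rpow_zero, ENNReal.ofReal_one]

theorem dimH_le_of_frequently_meshRatio_lt (ht : 0 ≤ t)
    (hfin : ∀ᶠ δ in 𝓝[>] 0, (meshCubesMeeting δ S).Finite)
    (h : ∃ᶠ δ in 𝓝[>] 0, meshRatio S δ < t) : dimH S ≤ ENNReal.ofReal t := by
  have hscale : Tendsto ENNReal.ofReal (𝓝[>] 0) (𝓝 0) := by
    simpa using (ENNReal.tendsto_ofReal (tendsto_id (x := 𝓝 (0 : ℝ)))).mono_left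
      nhdsWithin_le_nhds
  have hμ : μH[t] S ≤ 1 := by
    refine (Measure.hausdorffMeasure_le_liminf_tsum t S ENNReal.ofReal hscale
      (fun δ (p : meshCubesMeeting δ S) => meshCube δ p.1.1 p.1.2.1 p.1.2.2)
      (Eventually.of_forall fun _ _ => ediam_meshCube_le _ _ _)
      (eventually_mem_nhdsWithin.mono fun _ hδ => subset_iUnion_meshCube hδ S)).trans ?_
    refine liminf_le_of_frequently_le' ?_
    refine (h.and_eventually (hfin.and (Ioo_mem_nhdsGT one_pos))).mono ?_
    rintro δ ⟨hlt, hfinδ, hδ, hδ1⟩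
    exact tsum_ediam_meshCube_rpow_le_one ht hδ hfinδ (meshCount_lt_rpow_of_meshRatio_lt hδ hδ1 hlt)
  exact dimH_le_of_hausdorffMeasure_ne_top (d := t.toNNReal)
    (by rw [Real.coe_toNNReal t ht]; exact ne_top_of_le_ne_top ENNReal.one_ne_top hμ)

theorem dimH_le_ofReal_lowerBoxDim (hfin : ∀ᶠ δ in 𝓝[>] 0, (meshCubesMeeting δ S).Finite)
    (hbdd : IsBoundedUnder (· ≤ ·) (𝓝[>] 0) (meshRatio S)) :
    dimH S ≤ ENNReal.ofReal (lowerBoxDim S) := by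
  refine le_of_forall_gt_imp_ge_of_dense fun r hr => ?_
  rcases eq_or_ne r ⊤ with rfl | hr_top
  · exact le_top
  have hlt : lowerBoxDim S < r.toReal :=
    (ENNReal.ofReal_lt_iff_lt_toReal (lowerBoxDim_nonneg hbdd) hr_top).1 hr
  rw [← ENNReal.ofReal_toReal hr_top]
  exact dimH_le_of_frequently_meshRatio_lt ENNReal.toReal_nonneg hfin
    (frequently_lt_of_liminf_lt hbdd.isCoboundedUnder_flip hlt)

theorem dimH_le_lowerBoxDim_le_upperBoxDim_le (hC : 1 ≤ C) (ht : 0 ≤ t)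
    (hfin : ∀ᶠ δ in 𝓝[>] 0, (meshCubesMeeting δ S).Finite)
    (hN : ∀ᶠ δ in 𝓝[>] 0, (meshCount δ S : ℝ) ≤ C * δ ^ (-t)) :
    dimH S ≤ ENNReal.ofReal (lowerBoxDim S) ∧ lowerBoxDim S ≤ upperBoxDim S ∧
      upperBoxDim S ≤ t :=
  have hbdd := isBoundedUnder_le_meshRatio hC ht hN
  ⟨dimH_le_ofReal_lowerBoxDim hfin hbdd, lowerBoxDim_le_upperBoxDim hbdd,
    upperBoxDim_le_of_meshCount_le hC ht hN⟩

end BoxDim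

lemma sqrt_sq_add_sq_le {x y δ : ℝ} (hx : |x| ≤ δ) (hy : |y| ≤ δ) :
    √(x ^ 2 + y ^ 2) ≤ √2 * δ := by
  have hδ : 0 ≤ δ := (abs_nonneg x).trans hx
  rw [← Real.sqrt_sq hδ, ← Real.sqrt_mul zero_le_two]
  gcongr
  nlinarith [sq_abs x, sq_abs y, abs_nonneg x, abs_nonneg y]

section Graph

variable {a b c d c₀ s δ₀ δ : ℝ} {f : ℝ → ℝ → ℝ}

theorem meshCount_graphRect_le (hab : a ≤ b) (hcd : c ≤ d) (hc₀ : 0 ≤ c₀) (hs0 : 0 ≤ s)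
    (hH : ∀ t ∈ Icc a b, ∀ u ∈ Icc c d, ∀ x ∈ Icc a b, ∀ y ∈ Icc c d,
        √((t - x) ^ 2 + (u - y) ^ 2) < δ₀ →
        |f t u - f x y| ≤ c₀ * √((t - x) ^ 2 + (u - y) ^ 2) ^ s)
    (hδ : 0 < δ) (hδδ₀ : √2 * δ < δ₀) :
    (meshCubesMeeting δ (graphRect a b c d f)).Finite ∧
      (meshCount δ (graphRect a b c d f) : ℝ) ≤
        ((b - a) / δ + 2) * ((d - c) / δ + 2) * (2 * (c₀ * (√2 * δ) ^ s) / δ + 2) := by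
  refine meshCount_le_of_oscillation hδ hab hcd (by positivity)
    (fun p ⟨hpa, hpc, _⟩ => ⟨hpa, hpc, trivial⟩) ?_
  rintro ⟨t, u, z⟩ ⟨ht, hu, hz : z = f t u⟩ ⟨x, y, w⟩ ⟨hx, hy, hw : w = f x y⟩ htx huy
  subst hz hw
  have hdist := sqrt_sq_add_sq_le htx huy
  calc |f t u - f x y| ≤ c₀ * √((t - x) ^ 2 + (u - y) ^ 2) ^ s :=
        hH t ht u hu x hx y hy (hdist.trans_lt hδδ₀)
    _ ≤ c₀ * (√2 * δ) ^ s := by gcongr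

lemma mesh_bound_le_mul_rpow (hab : a ≤ b) (hcd : c ≤ d) (hc₀ : 0 ≤ c₀) (hs1 : s ≤ 1)
    (hδ : 0 < δ) (hδ1 : δ ≤ 1) :
    ((b - a) / δ + 2) * ((d - c) / δ + 2) * (2 * (c₀ * (√2 * δ) ^ s) / δ + 2) ≤
      (b - a + 2) * (d - c + 2) * (2 * c₀ * √2 ^ s + 2) * δ ^ (-(3 - s)) := by
  have hside : ∀ {L : ℝ}, 0 ≤ L → L / δ + 2 ≤ (L + 2) * δ⁻¹ := fun hL => by
    rw [← div_eq_mul_inv, add_div]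
    gcongr
    exact (le_div_iff₀ hδ).2 (by nlinarith)
  have hδs : δ ^ s * δ⁻¹ = δ ^ (s - 1) := by
    rw [Real.rpow_sub_one hδ.ne', div_eq_mul_inv]
  have hone : 1 ≤ δ ^ (s - 1) := Real.one_le_rpow_of_pos_of_le_one_of_nonpos hδ hδ1 (by linarith)
  have hheight : 2 * (c₀ * (√2 * δ) ^ s) / δ + 2 ≤ (2 * c₀ * √2 ^ s + 2) * δ ^ (s - 1) := by
    rw [Real.mul_rpow (by positivity) hδ.le, div_eq_mul_inv]
    calc 2 * (c₀ * (√2 ^ s * δ ^ s)) * δ⁻¹ + 2 = 2 * c₀ * √2 ^ s * δ ^ (s - 1) + 2 := by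
          rw [← hδs]; ring
      _ ≤ _ := by nlinarith
  calc ((b - a) / δ + 2) * ((d - c) / δ + 2) * (2 * (c₀ * (√2 * δ) ^ s) / δ + 2)
      ≤ ((b - a + 2) * δ⁻¹) * ((d - c + 2) * δ⁻¹) * ((2 * c₀ * √2 ^ s + 2) * δ ^ (s - 1)) := by
        gcongr
        exacts [hside (sub_nonneg.2 hab), hside (sub_nonneg.2 hcd)]
    _ = (b - a + 2) * (d - c + 2) * (2 * c₀ * √2 ^ s + 2) * δ ^ (-(3 - s)) := by
        rw [show -(3 - s) = -1 + -1 + (s - 1) by ring, Real.rpow_add hδ, Real.rpow_add hδ,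
          Real.rpow_neg_one]
        ring

theorem exists_eventually_meshCount_graphRect_le (hab : a ≤ b) (hcd : c ≤ d) (hc₀ : 0 ≤ c₀)
    (hs0 : 0 ≤ s) (hs1 : s ≤ 1) (hδ₀ : 0 < δ₀)
    (hH : ∀ t ∈ Icc a b, ∀ u ∈ Icc c d, ∀ x ∈ Icc a b, ∀ y ∈ Icc c d,
        √((t - x) ^ 2 + (u - y) ^ 2) < δ₀ →
        |f t u - f x y| ≤ c₀ * √((t - x) ^ 2 + (u - y) ^ 2) ^ s) :
    ∃ C, 1 ≤ C ∧ ∀ᶠ δ in 𝓝[>] 0, (meshCubesMeeting δ (graphRect a b c d f)).Finite ∧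
      (meshCount δ (graphRect a b c d f) : ℝ) ≤ C * δ ^ (-(3 - s)) := by
  refine ⟨(b - a + 2) * (d - c + 2) * (2 * c₀ * √2 ^ s + 2), ?_, ?_⟩
  · have h2 : (1 : ℝ) ≤ 2 * c₀ * √2 ^ s + 2 := by
      have : 0 ≤ 2 * c₀ * √2 ^ s := by positivity
      linarith
    exact one_le_mul_of_one_le_of_one_le
      (one_le_mul_of_one_le_of_one_le (by linarith) (by linarith)) h2
  have hsmall : ∀ᶠ δ in 𝓝[>] (0 : ℝ), δ ∈ Ioo 0 (min 1 (δ₀ / 2)) :=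
    Ioo_mem_nhdsGT (lt_min one_pos (half_pos hδ₀))
  filter_upwards [hsmall] with δ ⟨hδ, hδmin⟩
  have hδ1 : δ ≤ 1 := (hδmin.trans_le (min_le_left _ _)).le
  have hδδ₀ : √2 * δ < δ₀ := by
    have : δ < δ₀ / 2 := hδmin.trans_le (min_le_right _ _)
    have : √2 < 2 := (Real.sqrt_lt' two_pos).2 (by norm_num)
    nlinarith
  obtain ⟨hfin, hcount⟩ := meshCount_graphRect_le hab hcd hc₀ hs0 hH hδ hδδ₀
  exact ⟨hfin, hcount.trans (mesh_bound_le_mul_rpow hab hcd hc₀ hs1 hδ hδ1)⟩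

theorem dims_graphRect_le_three_sub (hab : a ≤ b) (hcd : c ≤ d) (hc₀ : 0 ≤ c₀) (hs0 : 0 ≤ s)
    (hs1 : s ≤ 1) (hδ₀ : 0 < δ₀)
    (hH : ∀ t ∈ Icc a b, ∀ u ∈ Icc c d, ∀ x ∈ Icc a b, ∀ y ∈ Icc c d,
        √((t - x) ^ 2 + (u - y) ^ 2) < δ₀ →
        |f t u - f x y| ≤ c₀ * √((t - x) ^ 2 + (u - y) ^ 2) ^ s) :
    dimH (graphRect a b c d f) ≤ ENNReal.ofReal (lowerBoxDim (graphRect a b c d f)) ∧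
      lowerBoxDim (graphRect a b c d f) ≤ upperBoxDim (graphRect a b c d f) ∧
      upperBoxDim (graphRect a b c d f) ≤ 3 - s := by
  obtain ⟨C, hC, hmesh⟩ :=
    exists_eventually_meshCount_graphRect_le hab hcd hc₀ hs0 hs1 hδ₀ hH
  exact dimH_le_lowerBoxDim_le_upperBoxDim_le hC (by linarith)
    (hmesh.mono fun _ h => h.1) (hmesh.mono fun _ h => h.2)

end Graph

theorem dim_graph_le_of_holder_general (a b c d c₀ s : ℝ) (hab : a < b) (hcd : c < d)
    (hc₀ : 0 < c₀) (hs0 : 0 ≤ s) (hs1 : s ≤ 1)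
    (f : ℝ → ℝ → ℝ) :
    ((∀ t ∈ Icc a b, ∀ u ∈ Icc c d, ∀ x ∈ Icc a b, ∀ y ∈ Icc c d,
        |f t u - f x y| ≤ c₀ * Real.sqrt ((t - x) ^ 2 + (u - y) ^ 2) ^ s) →
      dimH (graphRect a b c d f) ≤ ENNReal.ofReal (lowerBoxDim (graphRect a b c d f)) ∧
      lowerBoxDim (graphRect a b c d f) ≤ upperBoxDim (graphRect a b c d f) ∧
      upperBoxDim (graphRect a b c d f) ≤ 3 - s) ∧
    (∀ δ > (0 : ℝ),
      (∀ t ∈ Icc a b, ∀ u ∈ Icc c d, ∀ x ∈ Icc a b, ∀ y ∈ Icc c d,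
        Real.sqrt ((t - x) ^ 2 + (u - y) ^ 2) < δ →
        |f t u - f x y| ≤ c₀ * Real.sqrt ((t - x) ^ 2 + (u - y) ^ 2) ^ s) →
      dimH (graphRect a b c d f) ≤ ENNReal.ofReal (lowerBoxDim (graphRect a b c d f)) ∧
      lowerBoxDim (graphRect a b c d f) ≤ upperBoxDim (graphRect a b c d f) ∧
      upperBoxDim (graphRect a b c d f) ≤ 3 - s) := by
  exact ⟨fun hH => dims_graphRect_le_three_sub hab.le hcd.le hc₀.le hs0 hs1 one_pos
      fun t ht u hu x hx y hy _ => hH t ht u hu x hx y hy,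
    fun _ hδ hH => dims_graphRect_le_three_sub hab.le hcd.le hc₀.le hs0 hs1 hδ hH⟩

/-- a Hölder condition of exponent `s` gives the upper bound
`3 - s` on the fractal dimensions of the graph; the same holds if the Hölder
condition is only assumed for nearby pairs of points. -/
theorem dim_graph_le_of_holder (a b c d c₀ s : ℝ) (hab : a < b) (hcd : c < d)
    (hc₀ : 0 < c₀) (hs0 : 0 ≤ s) (hs1 : s ≤ 1)
    (f : ℝ → ℝ → ℝ)
    (hf : ContinuousOn (fun pt : ℝ × ℝ => f pt.1 pt.2) (Icc a b ×ˢ Icc c d)) :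
    ((∀ t ∈ Icc a b, ∀ u ∈ Icc c d, ∀ x ∈ Icc a b, ∀ y ∈ Icc c d,
        |f t u - f x y| ≤ c₀ * Real.sqrt ((t - x) ^ 2 + (u - y) ^ 2) ^ s) →
      dimH (graphRect a b c d f) ≤ ENNReal.ofReal (lowerBoxDim (graphRect a b c d f)) ∧
      lowerBoxDim (graphRect a b c d f) ≤ upperBoxDim (graphRect a b c d f) ∧
      upperBoxDim (graphRect a b c d f) ≤ 3 - s) ∧
    (∀ δ > (0 : ℝ),
      (∀ t ∈ Icc a b, ∀ u ∈ Icc c d, ∀ x ∈ Icc a b, ∀ y ∈ Icc c d,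
        Real.sqrt ((t - x) ^ 2 + (u - y) ^ 2) < δ →
        |f t u - f x y| ≤ c₀ * Real.sqrt ((t - x) ^ 2 + (u - y) ^ 2) ^ s) →
      dimH (graphRect a b c d f) ≤ ENNReal.ofReal (lowerBoxDim (graphRect a b c d f)) ∧
      lowerBoxDim (graphRect a b c d f) ≤ upperBoxDim (graphRect a b c d f) ∧
      upperBoxDim (graphRect a b c d f) ≤ 3 - s) :=
  dim_graph_le_of_holder_general a b c d c₀ s hab hcd hc₀ hs0 hs1 f
end

section
/- Let T : [a,b] × [c,d] → ℝ be the function built from a continuous generating function φ : [a₀,a₁] × [c,d] → ℝ with φ(a₀,y) = φ(a₁,y) for all y ∈ [c,d], as in the stated construction. If there exists y₀ ∈ [c,d] such that x ↦ φ(x, y₀) is non-constant on [a₀,a₁], then T is not of bounded variation in the sense of Arzelà on [a,b] × [c,d]. -/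
/-!
On `[a_m, a_{m+1}]` the function `T(·, y₀)` is the affine copy `x ↦ φ(ψ_{m+1} x, y₀)` damped by
`1/(m+1)` (plus a constant), so an oscillation `φ(u, y₀) - φ(t, y₀) = δ ≠ 0` of the generating
function reappears there as a jump of size `δ/(m+1)`. A single monotone chain along `y = y₀` that
visits the preimages of `t` and `u` in every interval collects `|δ| ∑ 1/(m+1)`, which diverges.
-/

open MeasureTheory Set Filter
open scoped Classical

theorem sum_range_comp_two_mul_le {M : Type*} [AddCommMonoid M] [PartialOrder M]
    [IsOrderedAddMonoid M] {g : ℕ → M} (hg : ∀ i, 0 ≤ g i) (N : ℕ) :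
    ∑ k ∈ Finset.range N, g (2 * k) ≤ ∑ i ∈ Finset.range (2 * N), g i := by
  induction N with
  | zero => simp
  | succ N ih =>
    rw [Finset.sum_range_succ, show 2 * (N + 1) = 2 * N + 1 + 1 by ring,
      Finset.sum_range_succ, Finset.sum_range_succ]
    exact le_add_of_le_of_nonneg (add_le_add_left ih _) (hg _)

section Interleave

variable {α : Type*}

def interleave (p q : ℕ → α) (n : ℕ) : α :=
  if n % 2 = 0 then p (n / 2) else q (n / 2)

theorem interleave_two_mul (p q : ℕ → α) (k : ℕ) :
    interleave p q (2 * k) = p k := by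
  simp [interleave]

theorem interleave_two_mul_add_one (p q : ℕ → α) (k : ℕ) :
    interleave p q (2 * k + 1) = q k := by
  simp [interleave, Nat.add_mod, show (2 * k + 1) / 2 = k by omega]

theorem monotone_interleave [Preorder α] {p q : ℕ → α} (hpq : ∀ n, p n ≤ q n)
    (hqp : ∀ n, q n ≤ p (n + 1)) :
    Monotone (interleave p q) := by
  refine monotone_nat_of_le_succ fun n => ?_
  rcases Nat.even_or_odd' n with ⟨k, rfl | rfl⟩
  · rw [interleave_two_mul, interleave_two_mul_add_one]
    exact hpq k
  · rw [interleave_two_mul_add_one, show 2 * k + 1 + 1 = 2 * (k + 1) by ring, interleave_two_mul]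
    exact hqp k

end Interleave

/-- The corner steps `(a, c) → (r 0, y₀)` and `(r m, y₀) → (b, d)` complete the run along
`y = y₀` to an admissible chain. -/
theorem ArzelaBV.sum_abs_sub_le {a b c d : ℝ} {f : ℝ → ℝ → ℝ} (hf : ArzelaBV a b c d f)
    {y₀ : ℝ} (hy₀ : y₀ ∈ Icc c d) {r : ℕ → ℝ} (hr : Monotone r) (har : a ≤ r 0)
    (hrb : ∀ i, r i ≤ b) :
    ∃ M, ∀ m, ∑ i ∈ Finset.range m, |f (r (i + 1)) y₀ - f (r i) y₀| ≤ M := by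
  obtain ⟨M, -, hM⟩ := hf
  refine ⟨M, fun m => ?_⟩
  set x : ℕ → ℝ := fun i => if i = 0 then a else if i ≤ m + 1 then r (i - 1) else b
  set y : ℕ → ℝ := fun i => if i = 0 then c else if i ≤ m + 1 then y₀ else d
  have hx : ∀ i < m + 2, x i ≤ x (i + 1) := by
    intro i hi
    simp only [x]
    split_ifs <;> first
      | contradiction
      | omega
      | exact le_rfl
      | exact hr (by omega)
      | exact hrb _
      | exact har.trans (hr (Nat.zero_le _))
  have hy : ∀ i < m + 2, y i ≤ y (i + 1) := by
    intro i hi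
    simp only [y]
    split_ifs <;> first
      | contradiction
      | omega
      | exact le_rfl
      | exact hy₀.1
      | exact hy₀.2
  have hchain := hM (m + 2) x y (by simp [x]) (by simp [x]) (by simp [y]) (by simp [y]) hx hy
  rw [Finset.sum_range_succ, Finset.sum_range_succ'] at hchain
  have hmid : ∀ i ∈ Finset.range m, |f (x (i + 1 + 1)) (y (i + 1 + 1)) - f (x (i + 1)) (y (i + 1))|
      = |f (r (i + 1)) y₀ - f (r i) y₀| := by
    intro i hi
    have := Finset.mem_range.mp hi
    simp only [x, y, Nat.add_one_ne_zero, if_false, Nat.add_sub_cancel,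
      show i + 1 + 1 ≤ m + 1 by omega, show i + 1 ≤ m + 1 by omega, if_true]
  rw [Finset.sum_congr rfl hmid] at hchain
  linarith [abs_nonneg (f (x (m + 1 + 1)) (y (m + 1 + 1)) - f (x (m + 1)) (y (m + 1))),
    abs_nonneg (f (x (0 + 1)) (y (0 + 1)) - f (x 0) (y 0))]

theorem not_arzelaBV_of_harmonic_jumps {a b c d : ℝ} {f : ℝ → ℝ → ℝ} {y₀ δ : ℝ}
    (hy₀ : y₀ ∈ Icc c d) (hδ : δ ≠ 0) {p q : ℕ → ℝ} (hap : a ≤ p 0) (hpq : ∀ n, p n ≤ q n)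
    (hqp : ∀ n, q n ≤ p (n + 1)) (hqb : ∀ n, q n ≤ b)
    (hjump : ∀ n : ℕ, f (q n) y₀ - f (p n) y₀ = δ / (n + 1)) :
    ¬ ArzelaBV a b c d f := by
  intro hf
  have hrb : ∀ i, interleave p q i ≤ b := by
    intro i
    rcases Nat.even_or_odd' i with ⟨k, rfl | rfl⟩
    · rw [interleave_two_mul]
      exact (hpq k).trans (hqb k)
    · rw [interleave_two_mul_add_one]
      exact hqb k
  obtain ⟨M, hM⟩ := hf.sum_abs_sub_le hy₀ (monotone_interleave hpq hqp)
    (by rwa [← mul_zero 2, interleave_two_mul]) hrb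
  obtain ⟨N, hN⟩ : ∃ N : ℕ, M < |δ| * ∑ k ∈ Finset.range N, (1 / (k + 1) : ℝ) :=
    ((Real.tendsto_sum_range_one_div_nat_succ_atTop.const_mul_atTop
      (abs_pos.mpr hδ)).eventually_gt_atTop M).exists
  have hharmonic : |δ| * ∑ k ∈ Finset.range N, (1 / (k + 1) : ℝ)
      ≤ ∑ i ∈ Finset.range (2 * N), |f (interleave p q (i + 1)) y₀ - f (interleave p q i) y₀| := by
    calc |δ| * ∑ k ∈ Finset.range N, (1 / (k + 1) : ℝ)
        = ∑ k ∈ Finset.range N,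
            |f (interleave p q (2 * k + 1)) y₀ - f (interleave p q (2 * k)) y₀| := by
          rw [Finset.mul_sum]
          refine Finset.sum_congr rfl fun k _ => ?_
          rw [interleave_two_mul, interleave_two_mul_add_one, hjump, abs_div,
            abs_of_pos (by positivity : (0 : ℝ) < k + 1), mul_one_div]
      _ ≤ _ := sum_range_comp_two_mul_le (g := fun i =>
          |f (interleave p q (i + 1)) y₀ - f (interleave p q i) y₀|) (fun i => abs_nonneg _) N
  linarith [hM (2 * N)]

theorem aseq_zero (a b : ℝ) : aseq a b 0 = a := by
  simp [aseq]

theorem aseq_le {a b : ℝ} (hab : a ≤ b) (n : ℕ) : aseq a b n ≤ b := by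
  have : 0 ≤ (b - a) / 2 ^ n := div_nonneg (by linarith) (by positivity)
  rw [aseq]
  linarith

noncomputable def psiSuccInv (a b : ℝ) (m : ℕ) (s : ℝ) : ℝ :=
  aseq a b m + (s - a) / 2 ^ m

theorem psiN_succ_psiSuccInv {a b : ℝ} (hab : a ≠ b) (m : ℕ) (s : ℝ) :
    psiN a b (m + 1) (psiSuccInv a b m s) = s := by
  have hba : b - a ≠ 0 := sub_ne_zero.mpr hab.symm
  simp only [psiN, psiSuccInv, aseq, Nat.add_sub_cancel]
  field_simp
  ring

theorem psiSuccInv_mem {a b s : ℝ} (hs : s ∈ Icc a (aseq a b 1)) (m : ℕ) :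
    psiSuccInv a b m s ∈ Icc (aseq a b m) (aseq a b (m + 1)) := by
  have hs2 : s - a ≤ (b - a) / 2 := by
    have := hs.2
    simp only [aseq] at this
    linarith
  have hstep : aseq a b (m + 1) - aseq a b m = ((b - a) / 2) / 2 ^ m := by
    simp only [aseq, pow_succ]
    ring
  have hlo : 0 ≤ (s - a) / 2 ^ m := div_nonneg (by linarith [hs.1]) (by positivity)
  have hhi : (s - a) / 2 ^ m ≤ ((b - a) / 2) / 2 ^ m := by gcongr
  constructor <;> simp only [psiSuccInv] <;> linarith

theorem psiSuccInv_mono (a b : ℝ) (m : ℕ) : Monotone (psiSuccInv a b m) := by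
  intro s t hst
  simp only [psiSuccInv]
  gcongr

theorem Fseq_succ_psiSuccInv {a b : ℝ} (hab : a ≠ b) (φ : ℝ → ℝ → ℝ) (m : ℕ) (s y : ℝ) :
    Fseq a b φ (m + 1) (psiSuccInv a b m s) y = (φ s y + m * φ a y) / (m + 1) := by
  rw [Fseq, psiN_succ_psiSuccInv hab, aseq_zero]
  push_cast
  field_simp
  ring

theorem construction_not_arzelaBV_general (a b c d : ℝ) (hab : a < b)
    (φ : ℝ → ℝ → ℝ)
    (T : ℝ → ℝ → ℝ)
    (hT : ∀ n : ℕ, 1 ≤ n → ∀ x ∈ Icc (aseq a b (n - 1)) (aseq a b n), ∀ y ∈ Icc c d,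
      T x y = Fseq a b φ n x y)
    (hnc : ∃ y₀ ∈ Icc c d, ∃ t ∈ Icc a (aseq a b 1), ∃ u ∈ Icc a (aseq a b 1),
      φ t y₀ ≠ φ u y₀) :
    ¬ ArzelaBV a b c d T := by
  obtain ⟨y₀, hy₀, t, ht, u, hu, hne⟩ := hnc
  wlog htu : t ≤ u generalizing t u
  · exact this u hu t ht hne.symm (le_of_not_ge htu)
  have hTinv : ∀ s ∈ Icc a (aseq a b 1), ∀ m : ℕ,
      T (psiSuccInv a b m s) y₀ = (φ s y₀ + m * φ a y₀) / (m + 1) := fun s hs m => by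
    rw [hT (m + 1) le_add_self _ (by simpa using psiSuccInv_mem hs m) y₀ hy₀,
      Fseq_succ_psiSuccInv hab.ne]
  refine not_arzelaBV_of_harmonic_jumps (p := fun m => psiSuccInv a b m t)
    (q := fun m => psiSuccInv a b m u) hy₀ (sub_ne_zero.mpr hne.symm) ?_
    (fun m => psiSuccInv_mono a b m htu)
    (fun m => (psiSuccInv_mem hu m).2.trans (psiSuccInv_mem ht (m + 1)).1)
    (fun m => (psiSuccInv_mem hu m).2.trans (aseq_le hab.le _)) (fun m => ?_)
  · simpa [aseq_zero] using (psiSuccInv_mem ht 0).1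
  · rw [hTinv u hu, hTinv t ht]
    ring

/-- if the generating function `φ` is non-constant along some
horizontal line, then the construction `T` is not of bounded variation in the
sense of Arzelà. -/
theorem construction_not_arzelaBV (a b c d : ℝ) (hab : a < b) (hcd : c < d)
    (φ : ℝ → ℝ → ℝ)
    (hφcont : ContinuousOn (fun pt : ℝ × ℝ => φ pt.1 pt.2) (Icc a (aseq a b 1) ×ˢ Icc c d))
    (hφper : ∀ y ∈ Icc c d, φ a y = φ (aseq a b 1) y)
    (T : ℝ → ℝ → ℝ)
    (hT : ∀ n : ℕ, 1 ≤ n → ∀ x ∈ Icc (aseq a b (n - 1)) (aseq a b n), ∀ y ∈ Icc c d,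
      T x y = Fseq a b φ n x y)
    (hTb : ∀ y ∈ Icc c d, T b y = φ a y)
    (hnc : ∃ y₀ ∈ Icc c d, ∃ t ∈ Icc a (aseq a b 1), ∃ u ∈ Icc a (aseq a b 1),
      φ t y₀ ≠ φ u y₀) :
    ¬ ArzelaBV a b c d T :=
  construction_not_arzelaBV_general a b c d hab φ T hT hnc
end
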